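/- arXiv:2411.15897 — 7 statements merged into one kernel-verified Lean document; each statement's English description precedes it below -/
import Mathlib

section
/- With K the distributed matrix and P the block-triangular preconditioner, the preconditioned matrix satisfies P⁻¹·K = [[I_n − A⁻¹·Bᵀ·H_p⁻¹·Ξ, 0],[H_p⁻¹·Ξ, I_m]], i.e., its (1,1)-block is I_n − Y, its (1,2)-block is the zero n×m matrix, its (2,1)-block is H_p⁻¹·Ξ, and its (2,2)-block is I_m. -/
open Matrix

/-- The preconditioned matrix satisfies
`P⁻¹·K = [[Iₙ − Y, 0],[Hₚ⁻¹·Ξ, Iₘ]]` where `Y = A⁻¹·Bᵀ·Hₚ⁻¹·Ξ`. -/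
theorem preconditioned_matrix_blocks (n m : ℕ)
    (A : Matrix (Fin n) (Fin n) ℂ) (hA : IsUnit A)
    (B : Matrix (Fin m) (Fin n) ℂ)
    (C Ap : Matrix (Fin m) (Fin m) ℂ)
    (Ξ : Matrix (Fin m) (Fin n) ℂ) (hΞ : Ξ = B * A - Ap * B)
    (Hp : Matrix (Fin m) (Fin m) ℂ) (hHp : Hp = B * Bᵀ + Ap * C) (hHpu : IsUnit Hp)
    (K : Matrix (Fin n ⊕ Fin m) (Fin n ⊕ Fin m) ℂ) (hK : K = fromBlocks A Bᵀ Ξ Hp)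
    (P : Matrix (Fin n ⊕ Fin m) (Fin n ⊕ Fin m) ℂ)
    (hP : P = fromBlocks A Bᵀ (0 : Matrix (Fin m) (Fin n) ℂ) Hp)
    (Y : Matrix (Fin n) (Fin n) ℂ) (hY : Y = A⁻¹ * Bᵀ * Hp⁻¹ * Ξ) :
    P⁻¹ * K = fromBlocks (1 - Y) (0 : Matrix (Fin n) (Fin m) ℂ) (Hp⁻¹ * Ξ) 1 := by
  subst hK hP hY
  rw [inv_fromBlocks_zero₂₁_of_isUnit_iff _ _ _ (iff_of_true hA hHpu), fromBlocks_multiply]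
  have h1 : Hp⁻¹ * Hp = 1 := Matrix.nonsing_inv_mul _ (Matrix.isUnit_iff_isUnit_det _ |>.mp hHpu)
  have hA1 : A⁻¹ * A = 1 := Matrix.nonsing_inv_mul _ (Matrix.isUnit_iff_isUnit_det _ |>.mp hA)
  simp only [Matrix.zero_mul, zero_add, Matrix.neg_mul, Matrix.mul_assoc, h1, Matrix.mul_one,
    hA1, ← sub_eq_add_neg, sub_self]
end

section
/- With K the distributed matrix and P the block-triangular preconditioner, the error iteration matrix T := I_{n+m} − P⁻¹·K equals the block matrix [[Y, 0],[−H_p⁻¹·Ξ, 0]], where Y = A⁻¹·Bᵀ·H_p⁻¹·Ξ; i.e., its (1,1)-block is Y, its (2,1)-block is −H_p⁻¹·Ξ, and its (1,2)- and (2,2)-blocks are zero. -/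
open Matrix

lemma fromBlocks_sub' {R : Type*} [SubtractionMonoid R] {l m n o : Type*}
    (A A' : Matrix n l R) (B B' : Matrix n m R) (C C' : Matrix o l R) (D D' : Matrix o m R) :
    fromBlocks A B C D - fromBlocks A' B' C' D' =
      fromBlocks (A - A') (B - B') (C - C') (D - D') := by
  ext (i | i) (j | j) <;> simp [fromBlocks]

/-- The error iteration matrix `T = I − P⁻¹·K` equals
`[[Y, 0],[−Hₚ⁻¹·Ξ, 0]]` where `Y = A⁻¹·Bᵀ·Hₚ⁻¹·Ξ`. -/
theorem error_iteration_matrix_blocks (n m : ℕ)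
    (A : Matrix (Fin n) (Fin n) ℂ) (hA : IsUnit A)
    (B : Matrix (Fin m) (Fin n) ℂ)
    (C Ap : Matrix (Fin m) (Fin m) ℂ)
    (Ξ : Matrix (Fin m) (Fin n) ℂ) (hΞ : Ξ = B * A - Ap * B)
    (Hp : Matrix (Fin m) (Fin m) ℂ) (hHp : Hp = B * Bᵀ + Ap * C) (hHpu : IsUnit Hp)
    (K : Matrix (Fin n ⊕ Fin m) (Fin n ⊕ Fin m) ℂ) (hK : K = fromBlocks A Bᵀ Ξ Hp)
    (P : Matrix (Fin n ⊕ Fin m) (Fin n ⊕ Fin m) ℂ)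
    (hP : P = fromBlocks A Bᵀ (0 : Matrix (Fin m) (Fin n) ℂ) Hp)
    (T : Matrix (Fin n ⊕ Fin m) (Fin n ⊕ Fin m) ℂ) (hT : T = 1 - P⁻¹ * K)
    (Y : Matrix (Fin n) (Fin n) ℂ) (hY : Y = A⁻¹ * Bᵀ * Hp⁻¹ * Ξ) :
    T = fromBlocks Y (0 : Matrix (Fin n) (Fin m) ℂ) (-(Hp⁻¹ * Ξ))
          (0 : Matrix (Fin m) (Fin m) ℂ) := by
  have hPinv : P⁻¹ = fromBlocks A⁻¹ (-(A⁻¹ * Bᵀ * Hp⁻¹)) 0 Hp⁻¹ := by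
    rw [hP, inv_fromBlocks_zero₂₁_of_isUnit_iff _ _ _ (iff_of_true hA hHpu)]
  have hAi : A⁻¹ * A = 1 :=
    Matrix.nonsing_inv_mul A ((Matrix.isUnit_iff_isUnit_det A).mp hA)
  have hHi : Hp⁻¹ * Hp = 1 :=
    Matrix.nonsing_inv_mul Hp ((Matrix.isUnit_iff_isUnit_det Hp).mp hHpu)
  rw [hT, hPinv, hK, fromBlocks_multiply, ← fromBlocks_one, fromBlocks_sub',
    fromBlocks_inj]
  refine ⟨?_, ?_, ?_, ?_⟩
  · rw [hY, hAi, Matrix.neg_mul]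
    abel
  · rw [Matrix.neg_mul, Matrix.mul_assoc (A⁻¹ * Bᵀ) Hp⁻¹ Hp, hHi, Matrix.mul_one]
    abel
  · rw [Matrix.zero_mul]
    abel
  · rw [Matrix.zero_mul, hHi]
    abel
end

section
/- The preconditioned matrix P⁻¹·K has 1 as an eigenvalue with geometric multiplicity at least n; equivalently, the null space of the error iteration matrix T := I_{n+m} − P⁻¹·K has dimension at least n. -/
open Matrix

/-- The preconditioned matrix `P⁻¹·K` has eigenvalue `1` with geometric
multiplicity at least `n`; equivalently, the null space of the error iteration matrix
`T = I − P⁻¹·K` has dimension at least `n`. -/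
theorem eigenvalue_one_multiplicity (n m : ℕ)
    (A : Matrix (Fin n) (Fin n) ℂ) (hA : IsUnit A)
    (B : Matrix (Fin m) (Fin n) ℂ)
    (C Ap : Matrix (Fin m) (Fin m) ℂ)
    (Ξ : Matrix (Fin m) (Fin n) ℂ) (hΞ : Ξ = B * A - Ap * B)
    (Hp : Matrix (Fin m) (Fin m) ℂ) (hHp : Hp = B * Bᵀ + Ap * C) (hHpu : IsUnit Hp)
    (K : Matrix (Fin n ⊕ Fin m) (Fin n ⊕ Fin m) ℂ) (hK : K = fromBlocks A Bᵀ Ξ Hp)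
    (P : Matrix (Fin n ⊕ Fin m) (Fin n ⊕ Fin m) ℂ)
    (hP : P = fromBlocks A Bᵀ (0 : Matrix (Fin m) (Fin n) ℂ) Hp)
    (T : Matrix (Fin n ⊕ Fin m) (Fin n ⊕ Fin m) ℂ) (hT : T = 1 - P⁻¹ * K) :
    n ≤ Module.finrank ℂ (Module.End.eigenspace (P⁻¹ * K).mulVecLin 1) ∧
    n ≤ Module.finrank ℂ (LinearMap.ker T.mulVecLin) := by
  -- P is invertible
  have hPu : IsUnit P.det := by
    rw [hP, Matrix.det_fromBlocks_zero₂₁]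
    exact ((Matrix.isUnit_iff_isUnit_det A).mp hA).mul
      ((Matrix.isUnit_iff_isUnit_det Hp).mp hHpu)
  have hPinv : P⁻¹ * P = 1 := Matrix.nonsing_inv_mul P hPu
  -- T = P⁻¹ * (P - K)
  have hT' : T = P⁻¹ * (P - K) := by
    rw [mul_sub, hPinv, hT]
  -- the kernel of T contains all Sum.elim x y with Ξ x = 0
  have hker : ∀ x y, Ξ *ᵥ x = 0 → Sum.elim x y ∈ LinearMap.ker T.mulVecLin := by
    intro x y hx
    have h1 : (P - K) *ᵥ Sum.elim x y = 0 := by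
      have hPK : P - K = fromBlocks 0 0 (-Ξ) 0 := by
        rw [hP, hK]
        ext i j
        cases i <;> cases j <;> simp [fromBlocks]
      rw [hPK, fromBlocks_mulVec]
      ext i
      cases i <;> simp [Matrix.neg_mulVec, hx]
    simp only [LinearMap.mem_ker, Matrix.mulVecLin_apply, hT', ← Matrix.mulVec_mulVec, h1,
      Matrix.mulVec_zero]
  -- the injection (ker Ξ) × ℂ^m → ker T
  let φ : (LinearMap.ker Ξ.mulVecLin × (Fin m → ℂ)) →ₗ[ℂ] (LinearMap.ker T.mulVecLin) :=
    { toFun := fun p => ⟨Sum.elim p.1.1 p.2, hker p.1.1 p.2 p.1.2⟩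
      map_add' := by
        intro p q
        ext i
        cases i <;> rfl
      map_smul' := by
        intro c p
        ext i
        cases i <;> rfl }
  have hφ : Function.Injective φ := by
    intro p q h
    have h' : Sum.elim p.1.1 p.2 = Sum.elim q.1.1 q.2 := congrArg Subtype.val h
    have h1 : p.1.1 = q.1.1 := funext fun i => congrFun h' (Sum.inl i)
    have h2 : p.2 = q.2 := funext fun i => congrFun h' (Sum.inr i)
    exact Prod.ext (Subtype.ext h1) h2
  have hdim : n ≤ Module.finrank ℂ (LinearMap.ker T.mulVecLin) := by
    have hle := LinearMap.finrank_le_finrank_of_injective hφ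
    rw [Module.finrank_prod, Module.finrank_pi] at hle
    have hrn := LinearMap.finrank_range_add_finrank_ker Ξ.mulVecLin
    rw [Module.finrank_pi] at hrn
    have hrk : Ξ.rank ≤ m := by
      simpa using Ξ.rank_le_card_height
    have hrk' : Ξ.rank = Module.finrank ℂ (LinearMap.range Ξ.mulVecLin) := rfl
    rw [hrk'] at hrk
    simp only [Fintype.card_fin] at hrn hrk hle ⊢
    omega
  refine ⟨?_, hdim⟩
  have heq : Module.End.eigenspace (P⁻¹ * K).mulVecLin 1 = LinearMap.ker T.mulVecLin := by
    ext v
    rw [Module.End.mem_eigenspace_iff, LinearMap.mem_ker, one_smul, hT]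
    simp only [Matrix.mulVecLin_apply, Matrix.sub_mulVec, Matrix.one_mulVec, sub_eq_zero]
    exact ⟨fun h => h.symm, fun h => h.symm⟩
  rw [heq]
  exact hdim
end

section
/- The spectrum of the error iteration matrix T := I_{n+m} − P⁻¹·K equals the spectrum of the m×m matrix Z := Ξ·A⁻¹·Bᵀ·H_p⁻¹ together with 0, i.e., spec(T) = spec(Z) ∪ {0}. -/
open Matrix

private lemma mem_spec_iff_det {ι : Type*} [Fintype ι] [DecidableEq ι]
    (M : Matrix ι ι ℂ) (μ : ℂ) :
    μ ∈ spectrum ℂ M ↔ (μ • (1 : Matrix ι ι ℂ) - M).det = 0 := by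
  rw [spectrum.mem_iff, Algebra.algebraMap_eq_smul_one, Matrix.isUnit_iff_isUnit_det,
    isUnit_iff_ne_zero, not_not]

private lemma key_det {n m : ℕ} (hn : 0 < n) (hm : 0 < m)
    (X : Matrix (Fin n) (Fin m) ℂ) (Y : Matrix (Fin m) (Fin n) ℂ) (μ : ℂ) :
    μ ^ m * (μ • (1 : Matrix (Fin n) (Fin n) ℂ) - X * Y).det
      = μ ^ n * (μ • (1 : Matrix (Fin m) (Fin m) ℂ) - Y * X).det := by
  rcases eq_or_ne μ 0 with h | h
  · simp [h, zero_pow hn.ne', zero_pow hm.ne']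
  · have e1 : μ • (1 : Matrix (Fin n) (Fin n) ℂ) - X * Y
        = μ • ((1 : Matrix (Fin n) (Fin n) ℂ) - (μ⁻¹ • X) * Y) := by
      rw [smul_sub, Matrix.smul_mul, smul_smul, mul_inv_cancel₀ h, one_smul]
    have e2 : μ • (1 : Matrix (Fin m) (Fin m) ℂ) - Y * X
        = μ • ((1 : Matrix (Fin m) (Fin m) ℂ) - Y * (μ⁻¹ • X)) := by
      rw [smul_sub, Matrix.mul_smul, smul_smul, mul_inv_cancel₀ h, one_smul]
    rw [e1, e2, Matrix.det_smul, Matrix.det_smul, Matrix.det_one_sub_mul_comm]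
    simp only [Fintype.card_fin]
    ring

/-- The spectrum of the error iteration matrix `T = I − P⁻¹·K` equals
the spectrum of `Z = Ξ·A⁻¹·Bᵀ·Hₚ⁻¹` together with `0`. -/
theorem spectrum_T_eq_spectrum_Z (n m : ℕ) (hn : 0 < n) (hm : 0 < m)
    (A : Matrix (Fin n) (Fin n) ℂ) (hA : IsUnit A)
    (B : Matrix (Fin m) (Fin n) ℂ)
    (C Ap : Matrix (Fin m) (Fin m) ℂ)
    (Ξ : Matrix (Fin m) (Fin n) ℂ) (hΞ : Ξ = B * A - Ap * B)
    (Hp : Matrix (Fin m) (Fin m) ℂ) (hHp : Hp = B * Bᵀ + Ap * C) (hHpu : IsUnit Hp)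
    (K : Matrix (Fin n ⊕ Fin m) (Fin n ⊕ Fin m) ℂ) (hK : K = fromBlocks A Bᵀ Ξ Hp)
    (P : Matrix (Fin n ⊕ Fin m) (Fin n ⊕ Fin m) ℂ)
    (hP : P = fromBlocks A Bᵀ (0 : Matrix (Fin m) (Fin n) ℂ) Hp)
    (T : Matrix (Fin n ⊕ Fin m) (Fin n ⊕ Fin m) ℂ) (hT : T = 1 - P⁻¹ * K)
    (Z : Matrix (Fin m) (Fin m) ℂ) (hZ : Z = Ξ * A⁻¹ * Bᵀ * Hp⁻¹) :
    spectrum ℂ T = spectrum ℂ Z ∪ {0} := by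
  have hAd : IsUnit A.det := (Matrix.isUnit_iff_isUnit_det A).mp hA
  have hHd : IsUnit Hp.det := (Matrix.isUnit_iff_isUnit_det Hp).mp hHpu
  have hAA : A * A⁻¹ = 1 := A.mul_nonsing_inv hAd
  have hA'A : A⁻¹ * A = 1 := A.nonsing_inv_mul hAd
  have hHH : Hp * Hp⁻¹ = 1 := Hp.mul_nonsing_inv hHd
  have hH'H : Hp⁻¹ * Hp = 1 := Hp.nonsing_inv_mul hHd
  set X : Matrix (Fin n) (Fin m) ℂ := A⁻¹ * Bᵀ * Hp⁻¹ with hX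
  -- compute P⁻¹
  have hPinv : P⁻¹ = fromBlocks A⁻¹ (-X) 0 Hp⁻¹ := by
    apply Matrix.inv_eq_right_inv
    rw [hP, Matrix.fromBlocks_multiply]
    have h12 : A * -X + Bᵀ * Hp⁻¹ = 0 := by
      rw [hX, Matrix.mul_neg, ← Matrix.mul_assoc, ← Matrix.mul_assoc, hAA, Matrix.one_mul,
        neg_add_cancel]
    rw [hAA, h12, hHH]
    simp [Matrix.fromBlocks_one]
  -- compute T
  have hTblocks : T = fromBlocks (X * Ξ) 0 (-(Hp⁻¹ * Ξ)) 0 := by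
    rw [hT, hPinv, hK, Matrix.fromBlocks_multiply]
    have h12 : A⁻¹ * Bᵀ + -X * Hp = 0 := by
      rw [hX, Matrix.neg_mul, Matrix.mul_assoc, hH'H, Matrix.mul_one, add_neg_cancel]
    have h11 : A⁻¹ * A + -X * Ξ = 1 - X * Ξ := by
      rw [hA'A, Matrix.neg_mul, sub_eq_add_neg]
    rw [h11, h12]
    simp only [Matrix.zero_mul, zero_add, hH'H]
    ext (i | i) (j | j) <;>
      simp [Matrix.fromBlocks, Matrix.one_apply, Matrix.sub_apply]
  have hZXY : Z = Ξ * X := by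
    rw [hZ, hX, Matrix.mul_assoc, Matrix.mul_assoc, Matrix.mul_assoc]
  ext μ
  have hdetT : (μ • (1 : Matrix (Fin n ⊕ Fin m) (Fin n ⊕ Fin m) ℂ) - T).det
      = (μ • (1 : Matrix (Fin n) (Fin n) ℂ) - X * Ξ).det * μ ^ m := by
    have : μ • (1 : Matrix (Fin n ⊕ Fin m) (Fin n ⊕ Fin m) ℂ) - T
        = fromBlocks (μ • 1 - X * Ξ) 0 (Hp⁻¹ * Ξ) (μ • 1) := by
      rw [hTblocks, ← Matrix.fromBlocks_one, Matrix.fromBlocks_smul]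
      ext (i | i) (j | j) <;> simp [Matrix.fromBlocks]
    rw [this, Matrix.det_fromBlocks_zero₁₂, Matrix.det_smul, Matrix.det_one, mul_one,
      Fintype.card_fin]
  simp only [Set.mem_union, Set.mem_singleton_iff, mem_spec_iff_det]
  rw [hdetT]
  constructor
  · intro h
    have h2 : μ ^ m * (μ • (1 : Matrix (Fin n) (Fin n) ℂ) - X * Ξ).det = 0 := by
      rw [mul_comm]; exact h
    rw [key_det hn hm X Ξ μ] at h2
    rw [hZXY]
    rcases mul_eq_zero.mp h2 with h3 | h3
    · right; exact pow_eq_zero_iff hn.ne' |>.mp h3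
    · left; exact h3
  · rintro (h | h)
    · have h2 : μ ^ n * (μ • (1 : Matrix (Fin m) (Fin m) ℂ) - Ξ * X).det = 0 := by
        rw [← hZXY, h, mul_zero]
      rw [← key_det hn hm X Ξ μ] at h2
      rcases mul_eq_zero.mp h2 with h3 | h3
      · rw [pow_eq_zero_iff hm.ne' |>.mp h3, zero_pow hm.ne', mul_zero]
      · rw [h3, zero_mul]
    · rw [h, zero_pow hm.ne', mul_zero]
end

section
/- The spectral radius of the error iteration matrix T := I_{n+m} − P⁻¹·K equals the spectral radius of the m×m matrix Z := Ξ·A⁻¹·Bᵀ·H_p⁻¹, i.e., ρ(T) = ρ(Z), where the spectral radius of a square complex matrix is the maximum of the absolute values of its eigenvalues. -/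
open Matrix Polynomial

/- `T = P⁻¹ (P - K)` and `P - K = [0; I] [-Ξ, 0]`, so `T = L R` with `L = P⁻¹ [0; I]` and
`R = [-Ξ, 0]`, while `R L` is `-Ξ` times the upper right block `-A⁻¹ Bᵀ Hₚ⁻¹` of `P⁻¹`, i.e. `Z`.
By Sylvester's identity `X^|q| χ(MN) = X^|p| χ(NM)` the spectra of `L R` and `R L` agree up to
`0`, and adding `0` to a set of moduli does not change its supremum. -/

theorem Real.sSup_insert_zero {s : Set ℝ} (hs : BddAbove s) (h0 : ∀ x ∈ s, 0 ≤ x) :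
    sSup (insert 0 s) = sSup s := by
  rcases s.eq_empty_or_nonempty with rfl | hne
  · simp [Real.sSup_empty]
  · rw [csSup_insert hs hne, sup_eq_right]
    exact Real.sSup_nonneg h0

theorem sSup_norm_image_insert_zero {E : Type*} [SeminormedAddGroup E] {s : Set E}
    (hs : s.Finite) : sSup (norm '' insert 0 s) = sSup (norm '' s) := by
  rw [Set.image_insert_eq, norm_zero]
  exact Real.sSup_insert_zero (hs.image _).bddAbove (by simp)

namespace Matrix

variable {p q K : Type*} [Fintype p] [Fintype q] [DecidableEq p] [DecidableEq q]

theorem insert_zero_spectrum_mul_comm [Field K] (M : Matrix p q K) (N : Matrix q p K) :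
    insert 0 (spectrum K (M * N)) = insert 0 (spectrum K (N * M)) := by
  ext z
  rcases eq_or_ne z 0 with rfl | hz
  · simp
  simp only [Set.mem_insert_iff, hz, false_or, mem_spectrum_iff_isRoot_charpoly, IsRoot.def]
  have h := congrArg (eval z) (charpoly_mul_comm' M N)
  simp only [eval_mul, eval_pow, eval_X] at h
  rw [← mul_eq_zero_iff_left (pow_ne_zero (Fintype.card q) hz), h,
    mul_eq_zero_iff_left (pow_ne_zero _ hz)]

theorem fromBlocks_zero₂₁_sub_fromBlocks [Ring K] {l o : Type*} [Fintype o] [DecidableEq o]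
    (A : Matrix l l K) (B : Matrix l o K) (C : Matrix o l K) (D : Matrix o o K) :
    fromBlocks A B 0 D - fromBlocks A B C D =
      fromRows (0 : Matrix l o K) (1 : Matrix o o K) * fromCols (-C) (0 : Matrix o o K) := by
  rw [fromRows_mul_fromCols]
  ext (i | i) (j | j) <;> simp

end Matrix

theorem spectral_radius_T_eq_Z_general (n m : ℕ)
    (A : Matrix (Fin n) (Fin n) ℂ) (hA : IsUnit A)
    (B : Matrix (Fin m) (Fin n) ℂ)
    (Ξ : Matrix (Fin m) (Fin n) ℂ)
    (Hp : Matrix (Fin m) (Fin m) ℂ) (hHpu : IsUnit Hp)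
    (K : Matrix (Fin n ⊕ Fin m) (Fin n ⊕ Fin m) ℂ) (hK : K = fromBlocks A Bᵀ Ξ Hp)
    (P : Matrix (Fin n ⊕ Fin m) (Fin n ⊕ Fin m) ℂ)
    (hP : P = fromBlocks A Bᵀ (0 : Matrix (Fin m) (Fin n) ℂ) Hp)
    (T : Matrix (Fin n ⊕ Fin m) (Fin n ⊕ Fin m) ℂ) (hT : T = 1 - P⁻¹ * K)
    (Z : Matrix (Fin m) (Fin m) ℂ) (hZ : Z = Ξ * A⁻¹ * Bᵀ * Hp⁻¹) :
    sSup ((fun z : ℂ => ‖z‖) '' spectrum ℂ T) =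
      sSup ((fun z : ℂ => ‖z‖) '' spectrum ℂ Z) := by
  have hPu : IsUnit P := hP ▸ isUnit_fromBlocks_zero₂₁.mpr ⟨hA, hHpu⟩
  have hPinv : P⁻¹ = fromBlocks A⁻¹ (-(A⁻¹ * Bᵀ * Hp⁻¹)) 0 Hp⁻¹ := by
    rw [hP, inv_fromBlocks_zero₂₁_of_isUnit_iff A Bᵀ Hp (iff_of_true hA hHpu)]
  set L := P⁻¹ * fromRows (0 : Matrix (Fin n) (Fin m) ℂ) (1 : Matrix (Fin m) (Fin m) ℂ)
  set R := fromCols (-Ξ) (0 : Matrix (Fin m) (Fin m) ℂ)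
  have hT_eq : T = L * R := by
    rw [hT, Matrix.mul_assoc, ← fromBlocks_zero₂₁_sub_fromBlocks, ← hP, ← hK, Matrix.mul_sub,
      nonsing_inv_mul P ((isUnit_iff_isUnit_det P).mp hPu)]
  have hZ_eq : Z = R * L := by
    simp only [L, R, hPinv, hZ, fromBlocks_mul_fromRows, fromCols_mul_fromRows]
    simp [Matrix.mul_assoc]
  rw [← sSup_norm_image_insert_zero T.finite_spectrum,
    ← sSup_norm_image_insert_zero Z.finite_spectrum, hT_eq, hZ_eq, insert_zero_spectrum_mul_comm]

/-- The spectral radius of the error iteration matrix `T = I − P⁻¹·K`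
equals the spectral radius of `Z = Ξ·A⁻¹·Bᵀ·Hₚ⁻¹`, where the spectral radius is the
maximum of the absolute values of the eigenvalues. -/
theorem spectral_radius_T_eq_Z (n m : ℕ) (hn : 0 < n) (hm : 0 < m)
    (A : Matrix (Fin n) (Fin n) ℂ) (hA : IsUnit A)
    (B : Matrix (Fin m) (Fin n) ℂ)
    (C Ap : Matrix (Fin m) (Fin m) ℂ)
    (Ξ : Matrix (Fin m) (Fin n) ℂ) (hΞ : Ξ = B * A - Ap * B)
    (Hp : Matrix (Fin m) (Fin m) ℂ) (hHp : Hp = B * Bᵀ + Ap * C) (hHpu : IsUnit Hp)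
    (K : Matrix (Fin n ⊕ Fin m) (Fin n ⊕ Fin m) ℂ) (hK : K = fromBlocks A Bᵀ Ξ Hp)
    (P : Matrix (Fin n ⊕ Fin m) (Fin n ⊕ Fin m) ℂ)
    (hP : P = fromBlocks A Bᵀ (0 : Matrix (Fin m) (Fin n) ℂ) Hp)
    (T : Matrix (Fin n ⊕ Fin m) (Fin n ⊕ Fin m) ℂ) (hT : T = 1 - P⁻¹ * K)
    (Z : Matrix (Fin m) (Fin m) ℂ) (hZ : Z = Ξ * A⁻¹ * Bᵀ * Hp⁻¹) :
    sSup ((fun z : ℂ => ‖z‖) '' spectrum ℂ T) =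
      sSup ((fun z : ℂ => ‖z‖) '' spectrum ℂ Z) :=
  spectral_radius_T_eq_Z_general n m A hA B Ξ Hp hHpu K hK P hP T hT Z hZ
end

section
/- The splitting iteration with splitting operator P converges for every initial error if and only if ρ(Z) < 1: the matrix powers T^k of the error iteration matrix T := I_{n+m} − P⁻¹·K converge to the zero matrix as k → ∞ (equivalently, T^k·e → 0 for every e ∈ ℂ^{n+m}) if and only if the spectral radius of Z := Ξ·A⁻¹·Bᵀ·H_p⁻¹ is strictly less than 1. -/
/-!
Block elimination factors the iteration matrix as `T = U * V` with `Z = V * U`, where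
`U = [A⁻¹ Bᵀ Hp⁻¹; -Hp⁻¹]` and `V = [Ξ, 0]`. Since `(U V)^(k+1) = U (V U)^k V`, the powers of `T`
tend to zero iff those of `Z` do, and by Gelfand's formula the powers of an element of a complex
Banach algebra tend to zero iff its spectral radius is less than one.
-/

open Filter Topology Matrix
open scoped ENNReal

namespace spectrum

variable {A : Type*} [NormedRing A] [NormedAlgebra ℂ A] [CompleteSpace A]

theorem spectralRadius_lt_one_of_tendsto_pow [NormOneClass A] {a : A}
    (h : Tendsto (a ^ ·) atTop (𝓝 0)) : spectralRadius ℂ a < 1 := by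
  obtain ⟨k, hk, hk0⟩ := (((tendsto_zero_iff_norm_tendsto_zero.mp h).eventually_lt_const
    zero_lt_one).and (eventually_ne_atTop 0)).exists
  have hpow : spectralRadius ℂ a ^ k < 1 :=
    calc spectralRadius ℂ a ^ k ≤ spectralRadius ℂ (a ^ k) := spectralRadius_pow_le a k hk0
      _ ≤ ‖a ^ k‖₊ := spectralRadius_le_nnnorm _
      _ < 1 := by exact_mod_cast hk
  exact lt_of_not_ge fun h1 => hpow.not_ge (one_le_pow₀ h1)

theorem tendsto_pow_atTop_nhds_zero_of_spectralRadius_lt_one {a : A}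
    (h : spectralRadius ℂ a < 1) : Tendsto (a ^ ·) atTop (𝓝 0) := by
  obtain ⟨c, hρc, hc1⟩ := ENNReal.lt_iff_exists_nnreal_btwn.mp h
  have hbound : ∀ᶠ k : ℕ in atTop, ‖a ^ k‖ ≤ (c : ℝ) ^ k := by
    filter_upwards [(pow_nnnorm_pow_one_div_tendsto_nhds_spectralRadius a).eventually_lt_const hρc,
      eventually_gt_atTop 0] with k hk hk0
    rw [one_div, ENNReal.rpow_inv_lt_iff (by positivity), ENNReal.rpow_natCast] at hk
    exact_mod_cast hk.le
  refine squeeze_zero_norm' hbound (tendsto_pow_atTop_nhds_zero_of_lt_one c.2 ?_)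
  exact_mod_cast hc1

theorem tendsto_pow_atTop_nhds_zero_iff_spectralRadius_lt_one [NormOneClass A] (a : A) :
    Tendsto (a ^ ·) atTop (𝓝 0) ↔ spectralRadius ℂ a < 1 :=
  ⟨spectralRadius_lt_one_of_tendsto_pow, tendsto_pow_atTop_nhds_zero_of_spectralRadius_lt_one⟩

theorem ofReal_sSup_norm_eq_spectralRadius [Nontrivial A] (a : A) :
    ENNReal.ofReal (sSup ((‖·‖) '' spectrum ℂ a)) = spectralRadius ℂ a := by
  obtain ⟨z, hz, hρ⟩ := exists_nnnorm_eq_spectralRadius_of_nonempty (spectrum.nonempty a)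
  have hmax : IsGreatest ((‖·‖) '' spectrum ℂ a) ‖z‖ := by
    refine ⟨⟨z, hz, rfl⟩, ?_⟩
    rintro _ ⟨w, hw, rfl⟩
    have : (‖w‖₊ : ℝ≥0∞) ≤ ‖z‖₊ := hρ ▸ le_iSup₂ (α := ℝ≥0∞) w hw
    exact_mod_cast this
  rw [hmax.csSup_eq, ← hρ, ofReal_norm]
  rfl

end spectrum

namespace Matrix

theorem tendsto_pow_atTop_nhds_zero_iff_sSup_norm_spectrum_lt_one {ι : Type*} [Fintype ι]
    [DecidableEq ι] (M : Matrix ι ι ℂ) :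
    Tendsto (M ^ ·) atTop (𝓝 0) ↔ sSup ((‖·‖) '' spectrum ℂ M) < 1 := by
  cases isEmpty_or_nonempty ι
  · simp [spectrum.of_subsingleton, Subsingleton.elim _ (0 : Matrix ι ι ℂ)]
  · -- Any Banach algebra norm will do; the ℓ∞ operator norm induces the entrywise topology.
    let := Matrix.linftyOpNormedRing (n := ι) (α := ℂ)
    let := Matrix.linftyOpNormedAlgebra (n := ι) (α := ℂ) (R := ℂ)
    rw [← ENNReal.ofReal_lt_one, spectrum.ofReal_sSup_norm_eq_spectralRadius]
    exact spectrum.tendsto_pow_atTop_nhds_zero_iff_spectralRadius_lt_one M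

theorem mul_pow_succ {l m R : Type*} [Fintype l] [Fintype m] [DecidableEq l] [DecidableEq m]
    [Semiring R] (U : Matrix l m R) (V : Matrix m l R) (k : ℕ) :
    (U * V) ^ (k + 1) = U * (V * U) ^ k * V := by
  induction k with
  | zero => simp
  | succ k ih => rw [pow_succ, ih, pow_succ]; simp only [Matrix.mul_assoc]

theorem tendsto_pow_mul_of_tendsto_pow_mul_comm {l m R : Type*} [Fintype l] [Fintype m]
    [DecidableEq l] [DecidableEq m] [Semiring R] [TopologicalSpace R] [IsTopologicalSemiring R]
    {U : Matrix l m R} {V : Matrix m l R} (h : Tendsto ((V * U) ^ ·) atTop (𝓝 0)) :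
    Tendsto ((U * V) ^ ·) atTop (𝓝 0) := by
  rw [← tendsto_add_atTop_iff_nat 1]
  have hcont : Continuous fun N : Matrix m m R => U * N * V := by fun_prop
  simpa [mul_pow_succ, Function.comp_def] using (hcont.tendsto 0).comp h

theorem tendsto_pow_mul_comm {l m R : Type*} [Fintype l] [Fintype m]
    [DecidableEq l] [DecidableEq m] [Semiring R] [TopologicalSpace R] [IsTopologicalSemiring R]
    (U : Matrix l m R) (V : Matrix m l R) :
    Tendsto ((U * V) ^ ·) atTop (𝓝 0) ↔ Tendsto ((V * U) ^ ·) atTop (𝓝 0) :=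
  ⟨tendsto_pow_mul_of_tendsto_pow_mul_comm, tendsto_pow_mul_of_tendsto_pow_mul_comm⟩

theorem tendsto_mulVec_nhds_zero_iff {α l m R : Type*} [Fintype m] [DecidableEq m] [Semiring R]
    [TopologicalSpace R] [IsTopologicalSemiring R] {f : α → Matrix l m R} {F : Filter α} :
    (∀ v, Tendsto (fun k => f k *ᵥ v) F (𝓝 0)) ↔ Tendsto f F (𝓝 0) := by
  refine ⟨fun h => ?_, fun h v => ?_⟩
  · refine tendsto_pi_nhds.mpr fun i => tendsto_pi_nhds.mpr fun j => ?_
    simpa [mulVec_single_one] using tendsto_pi_nhds.mp (h (Pi.single j 1)) i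
  · have hcont : Continuous fun N : Matrix l m R => N *ᵥ v := by fun_prop
    simpa [Function.comp_def] using (hcont.tendsto 0).comp h

theorem one_sub_inv_fromBlocks_zero₂₁_mul_fromBlocks {l m R : Type*} [Fintype l] [Fintype m]
    [DecidableEq l] [DecidableEq m] [CommRing R]
    {A : Matrix l l R} {D : Matrix m m R} (hA : IsUnit A) (hD : IsUnit D)
    (B : Matrix l m R) (C : Matrix m l R) :
    1 - (fromBlocks A B 0 D)⁻¹ * fromBlocks A B C D =
      fromRows (A⁻¹ * B * D⁻¹) (-D⁻¹) * fromCols C 0 := by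
  have hP : IsUnit (fromBlocks A B 0 D) := isUnit_fromBlocks_zero₂₁.mpr ⟨hA, hD⟩
  have hPE : fromBlocks A B 0 D * (fromRows (A⁻¹ * B * D⁻¹) (-D⁻¹) * fromCols C 0) =
      fromBlocks A B 0 D - fromBlocks A B C D := by
    rw [← Matrix.mul_assoc, fromBlocks_mul_fromRows, fromRows_mul_fromCols, sub_eq_add_neg,
      fromBlocks_neg, fromBlocks_add]
    simp [← Matrix.mul_assoc, mul_nonsing_inv _ ((isUnit_iff_isUnit_det _).mp hA),
      mul_nonsing_inv _ ((isUnit_iff_isUnit_det _).mp hD)]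
  have hPd := (isUnit_iff_isUnit_det _).mp hP
  calc 1 - (fromBlocks A B 0 D)⁻¹ * fromBlocks A B C D
      = (fromBlocks A B 0 D)⁻¹ * (fromBlocks A B 0 D - fromBlocks A B C D) := by
        rw [Matrix.mul_sub, nonsing_inv_mul _ hPd]
    _ = fromRows (A⁻¹ * B * D⁻¹) (-D⁻¹) * fromCols C 0 := by
        rw [← hPE, ← Matrix.mul_assoc, nonsing_inv_mul _ hPd, Matrix.one_mul]

end Matrix

theorem splitting_convergence_iff_general (n m : ℕ)
    (A : Matrix (Fin n) (Fin n) ℂ) (hA : IsUnit A)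
    (B : Matrix (Fin m) (Fin n) ℂ)
    (Ξ : Matrix (Fin m) (Fin n) ℂ)
    (Hp : Matrix (Fin m) (Fin m) ℂ) (hHpu : IsUnit Hp)
    (K : Matrix (Fin n ⊕ Fin m) (Fin n ⊕ Fin m) ℂ) (hK : K = fromBlocks A Bᵀ Ξ Hp)
    (P : Matrix (Fin n ⊕ Fin m) (Fin n ⊕ Fin m) ℂ)
    (hP : P = fromBlocks A Bᵀ (0 : Matrix (Fin m) (Fin n) ℂ) Hp)
    (T : Matrix (Fin n ⊕ Fin m) (Fin n ⊕ Fin m) ℂ) (hT : T = 1 - P⁻¹ * K)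
    (Z : Matrix (Fin m) (Fin m) ℂ) (hZ : Z = Ξ * A⁻¹ * Bᵀ * Hp⁻¹) :
    (Filter.Tendsto (fun k : ℕ => T ^ k) Filter.atTop
        (nhds (0 : Matrix (Fin n ⊕ Fin m) (Fin n ⊕ Fin m) ℂ)) ↔
      sSup ((fun z : ℂ => ‖z‖) '' spectrum ℂ Z) < 1) ∧
    ((∀ e : Fin n ⊕ Fin m → ℂ,
        Filter.Tendsto (fun k : ℕ => (T ^ k).mulVec e) Filter.atTop
          (nhds (0 : Fin n ⊕ Fin m → ℂ))) ↔
      sSup ((fun z : ℂ => ‖z‖) '' spectrum ℂ Z) < 1) := by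
  let U : Matrix (Fin n ⊕ Fin m) (Fin m) ℂ := fromRows (A⁻¹ * Bᵀ * Hp⁻¹) (-Hp⁻¹)
  let V : Matrix (Fin m) (Fin n ⊕ Fin m) ℂ := fromCols Ξ 0
  have hT_factor : T = U * V := by
    rw [hT, hK, hP]
    exact one_sub_inv_fromBlocks_zero₂₁_mul_fromBlocks hA hHpu Bᵀ Ξ
  have hZ_factor : Z = V * U := by
    rw [fromCols_mul_fromRows, hZ]
    simp [Matrix.mul_assoc]
  have hpow : Tendsto (fun k : ℕ => T ^ k) atTop (𝓝 0) ↔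
      sSup ((fun z : ℂ => ‖z‖) '' spectrum ℂ Z) < 1 := by
    rw [hT_factor, tendsto_pow_mul_comm, ← hZ_factor]
    exact tendsto_pow_atTop_nhds_zero_iff_sSup_norm_spectrum_lt_one Z
  exact ⟨hpow, tendsto_mulVec_nhds_zero_iff.trans hpow⟩

/-- The splitting iteration with splitting operator `P` converges for
every initial error iff `ρ(Z) < 1`: the powers `T^k` of the error iteration matrix
`T = I − P⁻¹·K` tend to the zero matrix (equivalently, `T^k·e → 0` for every `e`)
iff the spectral radius of `Z = Ξ·A⁻¹·Bᵀ·Hₚ⁻¹` is strictly less than `1`. -/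
theorem splitting_convergence_iff (n m : ℕ) (hn : 0 < n) (hm : 0 < m)
    (A : Matrix (Fin n) (Fin n) ℂ) (hA : IsUnit A)
    (B : Matrix (Fin m) (Fin n) ℂ)
    (C Ap : Matrix (Fin m) (Fin m) ℂ)
    (Ξ : Matrix (Fin m) (Fin n) ℂ) (hΞ : Ξ = B * A - Ap * B)
    (Hp : Matrix (Fin m) (Fin m) ℂ) (hHp : Hp = B * Bᵀ + Ap * C) (hHpu : IsUnit Hp)
    (K : Matrix (Fin n ⊕ Fin m) (Fin n ⊕ Fin m) ℂ) (hK : K = fromBlocks A Bᵀ Ξ Hp)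
    (P : Matrix (Fin n ⊕ Fin m) (Fin n ⊕ Fin m) ℂ)
    (hP : P = fromBlocks A Bᵀ (0 : Matrix (Fin m) (Fin n) ℂ) Hp)
    (T : Matrix (Fin n ⊕ Fin m) (Fin n ⊕ Fin m) ℂ) (hT : T = 1 - P⁻¹ * K)
    (Z : Matrix (Fin m) (Fin m) ℂ) (hZ : Z = Ξ * A⁻¹ * Bᵀ * Hp⁻¹) :
    (Filter.Tendsto (fun k : ℕ => T ^ k) Filter.atTop
        (nhds (0 : Matrix (Fin n ⊕ Fin m) (Fin n ⊕ Fin m) ℂ)) ↔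
      sSup ((fun z : ℂ => ‖z‖) '' spectrum ℂ Z) < 1) ∧
    ((∀ e : Fin n ⊕ Fin m → ℂ,
        Filter.Tendsto (fun k : ℕ => (T ^ k).mulVec e) Filter.atTop
          (nhds (0 : Fin n ⊕ Fin m → ℂ))) ↔
      sSup ((fun z : ℂ => ‖z‖) '' spectrum ℂ Z) < 1) :=
  splitting_convergence_iff_general n m A hA B Ξ Hp hHpu K hK P hP T hT Z hZ
end

section
/- Suppose u satisfies the incompressible (μ = 0) elastic Helmholtz equation ∇(λ·(div u)) + ρ·ω²·(1 − (γ/ω)·i)·u = q pointwise on ℝ^d. Then the scalar function λ·(div u) satisfies the acoustic Helmholtz equation ρ·div(ρ⁻¹·∇(λ·(div u))) + (ρ·ω²/λ)·(1 − (γ/ω)·i)·(λ·(div u)) = ρ·div(ρ⁻¹·q) pointwise on ℝ^d. -/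
/-!
Dividing the elastic equation by `ρ` gives `ρ⁻¹ ∇(λ div u) = ρ⁻¹ q - ω²(1 - (γ/ω) i) u`.
The right-hand side is differentiable because `ρ`, `q` and `u` are, so the divergence may be
taken term by term; multiplying by `ρ` and using `(ρ ω² / λ) · λ = ρ ω²` gives the acoustic
equation.
-/

noncomputable section

/-- The `i`-th partial derivative of a function `f : ℝ^d → E`. -/
def pderiv' {d : ℕ} {E : Type*} [NormedAddCommGroup E] [NormedSpace ℝ E]
    (i : Fin d) (f : (Fin d → ℝ) → E) : (Fin d → ℝ) → E :=
  fun x => fderiv ℝ f x (Pi.single i 1)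

/-- The divergence of a complex vector field `v : ℝ^d → ℂ^d`:
`(div v)(x) = ∑ i, ∂vᵢ/∂xᵢ(x)`. -/
def divC {d : ℕ} (v : (Fin d → ℝ) → (Fin d → ℂ)) : (Fin d → ℝ) → ℂ :=
  fun x => ∑ i, pderiv' i (fun y => v y i) x

/-- The gradient of a complex scalar function `f : ℝ^d → ℂ`:
the vector of partial derivatives. -/
def gradC {d : ℕ} (f : (Fin d → ℝ) → ℂ) : (Fin d → ℝ) → (Fin d → ℂ) :=
  fun x j => pderiv' j f x

section PartialDerivatives

variable {d : ℕ} {E : Type*} [NormedAddCommGroup E] [NormedSpace ℝ E]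

lemma pderiv'_sub (i : Fin d) {f g : (Fin d → ℝ) → E} {x : Fin d → ℝ}
    (hf : DifferentiableAt ℝ f x) (hg : DifferentiableAt ℝ g x) :
    pderiv' i (fun y => f y - g y) x = pderiv' i f x - pderiv' i g x := by
  simp only [pderiv', fderiv_fun_sub hf hg, sub_apply]

lemma pderiv'_const_mul (i : Fin d) (c : ℂ) (f : (Fin d → ℝ) → ℂ) (x : Fin d → ℝ) :
    pderiv' i (fun y => c * f y) x = c * pderiv' i f x := by
  simp only [pderiv']
  rw [show (fun y => c * f y) = c • f from rfl, fderiv_const_smul_field]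
  rfl

end PartialDerivatives

section Divergence

variable {d : ℕ} {v w : (Fin d → ℝ) → (Fin d → ℂ)} {x : Fin d → ℝ}

lemma divC_sub (hv : ∀ j, DifferentiableAt ℝ (fun y => v y j) x)
    (hw : ∀ j, DifferentiableAt ℝ (fun y => w y j) x) :
    divC (fun y j => v y j - w y j) x = divC v x - divC w x := by
  simp only [divC, pderiv'_sub _ (hv _) (hw _), Finset.sum_sub_distrib]

lemma divC_const_mul (c : ℂ) (v : (Fin d → ℝ) → (Fin d → ℂ)) (x : Fin d → ℝ) :
    divC (fun y j => c * v y j) x = c * divC v x := by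
  simp only [divC, pderiv'_const_mul, Finset.mul_sum]

end Divergence

lemma differentiable_ofReal_inv {E : Type*} [NormedAddCommGroup E] [NormedSpace ℝ E] {f : E → ℝ}
    (hf : Differentiable ℝ f) (h : ∀ x, f x ≠ 0) : Differentiable ℝ fun x => ((f x : ℂ))⁻¹ :=
  fun x => (Complex.ofRealCLM.differentiableAt.comp x (hf x)).inv (Complex.ofReal_ne_zero.2 (h x))

theorem incompressible_reduction_to_acoustic_general (d : ℕ)
    (om gam : ℝ)
    (rho lam : (Fin d → ℝ) → ℝ)
    (hrho_pos : ∀ x, 0 < rho x) (hlam_pos : ∀ x, 0 < lam x)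
    (hrho : ContDiff ℝ 1 rho)
    (u : (Fin d → ℝ) → (Fin d → ℂ)) (hu : ContDiff ℝ 3 u)
    (q : (Fin d → ℝ) → (Fin d → ℂ)) (hq : ContDiff ℝ 1 q)
    (heq : ∀ x j,
      gradC (fun y => (lam y : ℂ) * divC u y) x j +
        (rho x : ℂ) * (om : ℂ) ^ 2 * (1 - ((gam / om : ℝ) : ℂ) * Complex.I) * u x j =
      q x j) :
    ∀ x,
      (rho x : ℂ) *
          divC (fun y j => ((rho y : ℂ))⁻¹ *
            gradC (fun z => (lam z : ℂ) * divC u z) y j) x +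
        ((rho x : ℂ) * (om : ℂ) ^ 2 / (lam x : ℂ)) *
          (1 - ((gam / om : ℝ) : ℂ) * Complex.I) * ((lam x : ℂ) * divC u x) =
      (rho x : ℂ) * divC (fun y j => ((rho y : ℂ))⁻¹ * q y j) x := by
  intro x
  set c : ℂ := (om : ℂ) ^ 2 * (1 - ((gam / om : ℝ) : ℂ) * Complex.I)
  have hrho_ne : ∀ y, (rho y : ℂ) ≠ 0 := fun y => Complex.ofReal_ne_zero.2 (hrho_pos y).ne'
  have hlam_ne : (lam x : ℂ) ≠ 0 := Complex.ofReal_ne_zero.2 (hlam_pos x).ne'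
  have hflux : (fun y j => ((rho y : ℂ))⁻¹ * gradC (fun z => (lam z : ℂ) * divC u z) y j) =
      fun y j => ((rho y : ℂ))⁻¹ * q y j - c * u y j := by
    funext y j
    rw [← heq y j]
    field_simp [hrho_ne y]
    ring
  have hq_diff : ∀ j, DifferentiableAt ℝ (fun y => ((rho y : ℂ))⁻¹ * q y j) x := fun j =>
    (differentiable_ofReal_inv (hrho.differentiable one_ne_zero) (fun y => (hrho_pos y).ne') x).mul
      ((contDiff_pi.1 hq j).differentiable one_ne_zero x)
  have hu_diff : ∀ j, DifferentiableAt ℝ (fun y => c * u y j) x := fun j =>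
    ((contDiff_pi.1 hu j).differentiable (by norm_num) x).const_mul c
  rw [hflux, divC_sub hq_diff hu_diff, divC_const_mul]
  field_simp
  ring

/-- If `u` satisfies the incompressible (`μ = 0`) elastic Helmholtz
equation `∇(λ·div u) + ρ·ω²·(1 − (γ/ω)·i)·u = q` pointwise on `ℝ^d`, then the scalar
function `λ·div u` satisfies the acoustic Helmholtz equation
`ρ·div(ρ⁻¹·∇(λ·div u)) + (ρ·ω²/λ)·(1 − (γ/ω)·i)·(λ·div u) = ρ·div(ρ⁻¹·q)`. -/
theorem incompressible_reduction_to_acoustic (d : ℕ) (hd : 1 ≤ d)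
    (om gam : ℝ) (hom : 0 < om)
    (rho lam : (Fin d → ℝ) → ℝ)
    (hrho_pos : ∀ x, 0 < rho x) (hlam_pos : ∀ x, 0 < lam x)
    (hrho : ContDiff ℝ 1 rho) (hlam : ContDiff ℝ 2 lam)
    (u : (Fin d → ℝ) → (Fin d → ℂ)) (hu : ContDiff ℝ 3 u)
    (q : (Fin d → ℝ) → (Fin d → ℂ)) (hq : ContDiff ℝ 1 q)
    (heq : ∀ x j,
      gradC (fun y => (lam y : ℂ) * divC u y) x j +
        (rho x : ℂ) * (om : ℂ) ^ 2 * (1 - ((gam / om : ℝ) : ℂ) * Complex.I) * u x j =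
      q x j) :
    ∀ x,
      (rho x : ℂ) *
          divC (fun y j => ((rho y : ℂ))⁻¹ *
            gradC (fun z => (lam z : ℂ) * divC u z) y j) x +
        ((rho x : ℂ) * (om : ℂ) ^ 2 / (lam x : ℂ)) *
          (1 - ((gam / om : ℝ) : ℂ) * Complex.I) * ((lam x : ℂ) * divC u x) =
      (rho x : ℂ) * divC (fun y j => ((rho y : ℂ))⁻¹ * q y j) x :=
  incompressible_reduction_to_acoustic_general d om gam rho lam hrho_pos hlam_pos hrho u hu q hq heq

end
end
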